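/- (Theorem 5, part 1) Let L ⊆ [n]³ be a PLS set and let S be an independent set of G_L that is (p,n²)-maximal for every p ∈ {0, 1}. Then S is a 1/2-approximate solution of the PLSE instance L: for every independent set S* of G_L, 2·|S| ≥ |S*|. -/

import Mathlib

/-- A PLS set: any two distinct triples have Hamming distance at least 2. -/
def IsPLS {n : ℕ} (T : Set (Fin 3 → Fin n)) : Prop :=
  ∀ v ∈ T, ∀ w ∈ T, v ≠ w → 2 ≤ hammingDist v w

/-- The node set `V_L = [n]³ \ (L ∪ N*(L))`. -/
def VL {n : ℕ} (L : Set (Fin 3 → Fin n)) : Set (Fin 3 → Fin n) :=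
  {v | v ∉ L ∧ ∀ w ∈ L, hammingDist v w ≠ 1}

/-- The graph `GraphL`: distinct nodes of `V_L` are adjacent iff their Hamming distance is 1. -/
def GraphL {n : ℕ} (L : Set (Fin 3 → Fin n)) : SimpleGraph (Fin 3 → Fin n) where
  Adj v w := v ∈ VL L ∧ w ∈ VL L ∧ hammingDist v w = 1
  symm := by
    refine ⟨?_⟩
    rintro v w ⟨hv, hw, h⟩
    exact ⟨hw, hv, by rwa [hammingDist_comm]⟩
  loopless := by
    refine ⟨?_⟩
    rintro v ⟨_, _, h⟩
    simp [hammingDist_self] at h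

/-- An independent set of a simple graph. -/
def IsIndep {V : Type*} (G : SimpleGraph V) (S : Set V) : Prop :=
  ∀ v ∈ S, ∀ w ∈ S, ¬ G.Adj v w

/-- The grid line `ℓ_{v,d}`: all triples agreeing with `v` in both coordinates other than `d`. -/
def gridLine {n : ℕ} (v : Fin 3 → Fin n) (d : Fin 3) : Set (Fin 3 → Fin n) :=
  {w | ∀ e, e ≠ d → w e = v e}

/-!
Every `v ∈ S* \ S` has a neighbour in `S` (otherwise add it: 0-maximality), and no `s ∈ S` is
the only `S`-neighbour of two vertices of `S* \ S` (otherwise swap `s` for both: 1-maximality).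
A vertex has at most three neighbours in an independent set, one per coordinate direction, since
the neighbours of `s` differing from it in the same coordinate are pairwise adjacent. Counting the
edges between `S* \ S` and `S \ S*` then gives `2 |S* \ S| ≤ |S \ S*| + 3 |S \ S*|`.
-/

open Finset

section HammingDist

variable {ι : Type*} [Fintype ι] {β : ι → Type*} [∀ i, DecidableEq (β i)]

theorem eq_of_apply_ne_of_hammingDist_eq_one {x z : ∀ i, β i} (h : hammingDist x z = 1)
    {i j : ι} (hi : x i ≠ z i) (hj : x j ≠ z j) : i = j :=
  Finset.card_le_one.1 h.le i (by simpa using hi) j (by simpa using hj)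

theorem card_le_of_hammingDist_eq_one {z : ∀ i, β i} {A : Finset (∀ i, β i)}
    (hz : ∀ x ∈ A, hammingDist x z = 1)
    (hA : (A : Set (∀ i, β i)).Pairwise fun x y => hammingDist x y ≠ 1) :
    #A ≤ Fintype.card ι := by
  classical
  refine card_le_card_of_forall_subsingleton (fun x i => x i ≠ z i) (t := univ)
    (fun x hx => ?_) (fun i _ x hx y hy => ?_)
  · obtain ⟨i, hi⟩ :=
      Function.ne_iff.1 (hammingDist_ne_zero.1 (by rw [hz x hx]; exact one_ne_zero))
    exact ⟨i, mem_univ i, hi⟩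
  · have hxy : hammingDist x y ≤ 1 := Finset.card_le_one.2 fun j hj j' hj' => by
      have agree_off_i : ∀ k, x k ≠ y k → k = i := fun k hk => by
        by_cases hxk : x k = z k
        · exact eq_of_apply_ne_of_hammingDist_eq_one (hz y hy.1) (by rwa [← hxk, ne_comm]) hy.2
        · exact eq_of_apply_ne_of_hammingDist_eq_one (hz x hx.1) hxk hx.2
      rw [agree_off_i j (by simpa using hj), agree_off_i j' (by simpa using hj')]
    by_contra hne
    exact hA hx.1 hy.1 hne (le_antisymm hxy (hammingDist_pos.2 hne))

end HammingDist

section DoubleCounting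

variable {α : Type*}

theorem two_mul_card_le_of_dominated (r : α → α → Prop) [DecidableRel r] {A B : Finset α}
    {k : ℕ} (hdom : ∀ v ∈ A, ∃ s ∈ B, r v s)
    (hpriv : ∀ s ∈ B, ∀ v ∈ A, ∀ w ∈ A,
      (∀ t ∈ B, r v t → t = s) → (∀ t ∈ B, r w t → t = s) → v = w)
    (hdeg : ∀ s ∈ B, #{v ∈ A | r v s} ≤ k) :
    2 * #A ≤ (k + 1) * #B := by
  set A₁ := {v ∈ A | #(B.bipartiteAbove r v) = 1}
  have hA₁ : #A₁ ≤ #B := by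
    refine card_le_card_of_forall_subsingleton r (fun v hv => (hdom v (mem_filter.1 hv).1))
      (fun s hs v hv w hw => ?_)
    have only_s : ∀ u, #(B.bipartiteAbove r u) = 1 → r u s → ∀ t ∈ B, r u t → t = s :=
      fun u hu hus t ht hut => Finset.card_le_one.1 hu.le t (mem_filter.2 ⟨ht, hut⟩) s
        (mem_filter.2 ⟨hs, hus⟩)
    exact hpriv s hs v (mem_filter.1 hv.1).1 w (mem_filter.1 hw.1).1
      (only_s v (mem_filter.1 hv.1).2 hv.2) (only_s w (mem_filter.1 hw.1).2 hw.2)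
  have hedges : ∑ v ∈ A, #(B.bipartiteAbove r v) ≤ k * #B := by
    rw [sum_card_bipartiteAbove_eq_sum_card_bipartiteBelow]
    exact (sum_le_card_nsmul B _ k hdeg).trans_eq (by rw [smul_eq_mul, mul_comm])
  -- every `v ∈ A` has a `B`-neighbour, and at least two unless `v ∈ A₁`
  have hweights : 2 * #A ≤ #A₁ + ∑ v ∈ A, #(B.bipartiteAbove r v) := by
    rw [card_filter, ← sum_add_distrib, mul_comm, ← smul_eq_mul, ← sum_const]
    refine sum_le_sum fun v hv => ?_
    obtain ⟨s, hs, hvs⟩ := hdom v hv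
    have : 0 < #(B.bipartiteAbove r v) := card_pos.2 ⟨s, mem_filter.2 ⟨hs, hvs⟩⟩
    split_ifs <;> omega
  nlinarith

variable [DecidableEq α] (G : SimpleGraph α) [DecidableRel G.Adj]

theorem two_mul_card_le_of_locally_optimal {S T : Finset α} {k : ℕ} (hk : 1 ≤ k)
    (hT : IsIndep G T) (hdom : ∀ v ∈ T \ S, ∃ s ∈ S, G.Adj v s)
    (hpriv : ∀ s ∈ S, ∀ v ∈ T \ S, ∀ w ∈ T \ S,
      (∀ t ∈ S, G.Adj v t → t = s) → (∀ t ∈ S, G.Adj w t → t = s) → v = w)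
    (hdeg : ∀ s ∈ S, #{v ∈ T | G.Adj v s} ≤ k) :
    2 * #T ≤ (k + 1) * #S := by
  have outside_T : ∀ v ∈ T \ S, ∀ t ∈ S, G.Adj v t → t ∈ S \ T := fun v hv t ht hvt =>
    mem_sdiff.2 ⟨ht, fun htT => hT v (mem_sdiff.1 hv).1 t htT hvt⟩
  have key := two_mul_card_le_of_dominated G.Adj (A := T \ S) (B := S \ T) (k := k)
    (fun v hv => by
      obtain ⟨s, hs, hvs⟩ := hdom v hv
      exact ⟨s, outside_T v hv s hs hvs, hvs⟩)
    (fun s hs v hv w hw hvs hws => hpriv s (mem_sdiff.1 hs).1 v hv w hw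
      (fun t ht hvt => hvs t (outside_T v hv t ht hvt) hvt)
      (fun t ht hwt => hws t (outside_T w hw t ht hwt) hwt))
    (fun s hs => (card_le_card (filter_subset_filter _ sdiff_subset)).trans
      (hdeg s (mem_sdiff.1 hs).1))
  have hTS := card_sdiff_add_card_inter T S
  have hST := card_sdiff_add_card_inter S T
  rw [inter_comm] at hST
  nlinarith

end DoubleCounting

section Maximality

variable {V : Type*} {G : SimpleGraph V}

theorem IsIndep.mono {S R : Set V} (hS : IsIndep G S) (hRS : R ⊆ S) : IsIndep G R :=
  fun v hv w hw => hS v (hRS hv) w (hRS hw)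

theorem IsIndep.union {S I : Set V} (hS : IsIndep G S) (hI : IsIndep G I)
    (hSI : ∀ v ∈ S, ∀ w ∈ I, ¬ G.Adj v w) : IsIndep G (S ∪ I) := by
  rintro v (hv | hv) w (hw | hw) hvw
  exacts [hS v hv w hw hvw, hSI v hv w hw hvw, hSI w hw v hv hvw.symm, hI v hv w hw hvw]

theorem isIndep_pair {v w : V} (hvw : ¬ G.Adj v w) : IsIndep G {v, w} := by
  rintro a (rfl | rfl) b (rfl | rfl) hab
  exacts [G.loopless.irrefl _ hab, hvw hab, hvw hab.symm, G.loopless.irrefl _ hab]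

variable [Finite V] {U S : Set V}

theorem exists_adj_of_add_maximal (hS : IsIndep G S)
    (hmax : ∀ I ⊆ U \ S, IsIndep G (S ∪ I) → (S ∪ I).ncard ≤ S.ncard)
    {v : V} (hv : v ∈ U \ S) : ∃ s ∈ S, G.Adj v s := by
  by_contra! hno
  have hmax₀ := hmax {v} (Set.singleton_subset_iff.2 hv) <|
    hS.union (by rintro _ rfl _ rfl; exact G.loopless.irrefl _)
      (by rintro s hs _ rfl hsv; exact hno s hs hsv.symm)
  rw [Set.union_singleton, Set.ncard_insert_of_notMem hv.2] at hmax₀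
  omega

theorem eq_of_swap_maximal (hS : IsIndep G S)
    (hmax : ∀ R ⊆ S, R.ncard = 1 → ∀ I ⊆ U \ S,
      IsIndep G ((S \ R) ∪ I) → ((S \ R) ∪ I).ncard ≤ S.ncard)
    {s v w : V} (hs : s ∈ S) (hv : v ∈ U \ S) (hw : w ∈ U \ S) (hvw : ¬ G.Adj v w)
    (hvs : ∀ t ∈ S, G.Adj v t → t = s) (hws : ∀ t ∈ S, G.Adj w t → t = s) : v = w := by
  by_contra hne
  have hcross : ∀ t ∈ S \ {s}, ∀ u ∈ ({v, w} : Set V), ¬ G.Adj t u := by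
    rintro t ⟨ht, hts⟩ u (rfl | rfl) htu
    exacts [hts (hvs t ht htu.symm), hts (hws t ht htu.symm)]
  have hdisj : Disjoint (S \ {s}) {v, w} := by
    rw [Set.disjoint_left]
    rintro t ⟨ht, -⟩ (rfl | rfl)
    exacts [hv.2 ht, hw.2 ht]
  have hswap := hmax {s} (Set.singleton_subset_iff.2 hs) (Set.ncard_singleton s) {v, w}
    (Set.insert_subset hv (Set.singleton_subset_iff.2 hw))
    ((hS.mono Set.sdiff_subset).union (isIndep_pair hvw) hcross)
  rw [Set.ncard_union_eq hdisj, Set.ncard_sdiff_singleton_of_mem hs, Set.ncard_pair hne] at hswap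
  have := (Set.ncard_pos (Set.toFinite S)).2 ⟨s, hs⟩
  omega

end Maximality

theorem card_adj_le_three {n : ℕ} {L : Set (Fin 3 → Fin n)} [DecidableRel (GraphL L).Adj]
    {T : Finset (Fin 3 → Fin n)} (hT : IsIndep (GraphL L) T) (s : Fin 3 → Fin n) :
    #{v ∈ T | (GraphL L).Adj v s} ≤ 3 :=
  (card_le_of_hammingDist_eq_one (z := s) (fun _ hv => (mem_filter.1 hv).2.2.2)
    fun v hv w hw _ hvw => hT v (mem_filter.1 hv).1 w (mem_filter.1 hw).1
      ⟨(mem_filter.1 hv).2.1, (mem_filter.1 hw).2.1, hvw⟩).trans_eq (Fintype.card_fin 3)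

theorem one_maximal_half_approx_general (n : ℕ)
    (L : Set (Fin 3 → Fin n))
    (S : Set (Fin 3 → Fin n)) (hind : IsIndep (GraphL L) S)
    (hmax : ∀ p : ℕ, p ≤ 1 → ∀ R ⊆ S, R.ncard = p → ∀ I ⊆ VL L \ S,
      IsIndep (GraphL L) ((S \ R) ∪ I) → ((S \ R) ∪ I).ncard ≤ S.ncard)
    (Sstar : Set (Fin 3 → Fin n)) (hstar : Sstar ⊆ VL L)
    (hindstar : IsIndep (GraphL L) Sstar) :
    Sstar.ncard ≤ 2 * S.ncard := by
  classical
  have hmax₀ : ∀ I ⊆ VL L \ S, IsIndep (GraphL L) (S ∪ I) → (S ∪ I).ncard ≤ S.ncard :=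
    fun I hI hSI => by
      simpa using hmax 0 (Nat.zero_le 1) ∅ (Set.empty_subset _) (Set.ncard_empty _) I hI
        (by simpa using hSI)
  have hindstar' : IsIndep (GraphL L) ↑Sstar.toFinset := by simpa using hindstar
  have key := two_mul_card_le_of_locally_optimal (GraphL L) (S := S.toFinset) (k := 3)
    (by norm_num) hindstar'
    (fun v hv => by
      simp only [mem_sdiff, Set.mem_toFinset] at hv ⊢
      exact exists_adj_of_add_maximal hind hmax₀ ⟨hstar hv.1, hv.2⟩)
    (fun s hs v hv w hw hvs hws => by
      simp only [mem_sdiff, Set.mem_toFinset] at hs hv hw hvs hws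
      exact eq_of_swap_maximal hind (hmax 1 le_rfl) hs ⟨hstar hv.1, hv.2⟩ ⟨hstar hw.1, hw.2⟩
        (hindstar v hv.1 w hw.1) hvs hws)
    (fun s _ => card_adj_le_three hindstar' s)
  rw [Set.ncard_eq_toFinset_card' S, Set.ncard_eq_toFinset_card' Sstar]
  omega

/-- Theorem 5, part 1: a 1-maximal solution (i.e. `(p,n²)`-maximal for
every `p ∈ {0,1}`) is a 1/2-approximate solution of the PLSE instance `L`. -/
theorem one_maximal_half_approx (n : ℕ) (hn : 2 ≤ n)
    (L : Set (Fin 3 → Fin n)) (hL : IsPLS L)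
    (S : Set (Fin 3 → Fin n)) (hsub : S ⊆ VL L) (hind : IsIndep (GraphL L) S)
    (hmax : ∀ p : ℕ, p ≤ 1 → ∀ R ⊆ S, R.ncard = p → ∀ I ⊆ VL L \ S,
      IsIndep (GraphL L) ((S \ R) ∪ I) → ((S \ R) ∪ I).ncard ≤ S.ncard)
    (Sstar : Set (Fin 3 → Fin n)) (hstar : Sstar ⊆ VL L)
    (hindstar : IsIndep (GraphL L) Sstar) :
    Sstar.ncard ≤ 2 * S.ncard :=
  one_maximal_half_approx_general n L S hind hmax Sstar hstar hindstar
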